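/- arXiv:1003.4491 — 2 statements merged into one kernel-verified Lean document; each statement's English description precedes it below -/
import Mathlib

section
/- (Jacobi triple product) For |p|<1 and x ∈ ℂ*, the series ∑_{n∈ℤ} p^{n(n-1)/2}(-x)^n converges and equals (p;p)_∞ · θ_p(x), where θ_p(x) = (x;p)_∞(p/x;p)_∞. -/
open scoped BigOperators

/-- The infinite q-Pochhammer symbol `(x;q)_∞ = ∏_{j≥0} (1 - x q^j)`. -/
noncomputable def pochInf (x q : ℂ) : ℂ := ∏' j : ℕ, (1 - x * q ^ j)

/-- The theta function `θ_p(x) = (x;p)_∞ (p/x;p)_∞`. -/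
noncomputable def theta (p x : ℂ) : ℂ := pochInf x p * pochInf (p / x) p

/-!
Cauchy's proof. The q-binomial theorem `∏_{k<M} (1 + y q^k) = ∑_j q^(j choose 2) [M, j]_q y^j`,
applied with `M = 2N` and `y = -x p^(-N)`, gives the finite identity
`(x;p)_N (p/x;p)_N = ∑_{|n| ≤ N} [2N, N+n]_p p^(n(n-1)/2) (-x)^n`.
As `N → ∞` each Gaussian binomial `[2N, N+n]_p = (p;p)_{2N} / ((p;p)_{N+n} (p;p)_{N-n})` tends to
`1 / (p;p)_∞`, and all of them are bounded uniformly because `(p;p)_m` converges to a nonzero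
limit; so Tannery's theorem lets the limit pass inside the sum.
-/

open Finset Filter Topology

section Algebra

variable {R : Type*} [CommRing R]

def poch (x q : R) (m : ℕ) : R := ∏ j ∈ range m, (1 - x * q ^ j)

lemma poch_zero (x q : R) : poch x q 0 = 1 := prod_range_zero _

lemma poch_succ (x q : R) (m : ℕ) : poch x q (m + 1) = poch x q m * (1 - x * q ^ m) :=
  prod_range_succ _ m

/-- The Gaussian binomial coefficient `[m, k]_q`, through the q-Pascal rule. -/
def qBinom (q : R) : ℕ → ℕ → R
  | _, 0 => 1
  | 0, _ + 1 => 0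
  | m + 1, k + 1 => qBinom q m k + q ^ (k + 1) * qBinom q m (k + 1)

lemma qBinom_eq_zero_of_lt (q : R) {m k : ℕ} (h : m < k) : qBinom q m k = 0 := by
  induction m generalizing k with
  | zero => obtain ⟨k, rfl⟩ := Nat.exists_eq_add_of_lt h; rfl
  | succ m ih =>
    obtain ⟨k, rfl⟩ := Nat.exists_eq_add_of_lt (Nat.zero_lt_of_lt h)
    simp only [qBinom, zero_add]
    rw [ih (by omega), ih (by omega), mul_zero, add_zero]

@[simp]
lemma qBinom_self (q : R) (m : ℕ) : qBinom q m m = 1 := by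
  induction m with
  | zero => rfl
  | succ m ih => rw [qBinom, ih, qBinom_eq_zero_of_lt q (by omega), mul_zero, add_zero]

lemma poch_mul_poch_mul_qBinom (q : R) (k l : ℕ) :
    poch q q k * poch q q l * qBinom q (k + l) k = poch q q (k + l) := by
  induction k generalizing l with
  | zero => cases l <;> simp [poch_zero, qBinom]
  | succ k ihk =>
    induction l with
    | zero => simp [poch_zero]
    | succ l ihl =>
      have h₁ : poch q q k * (poch q q l * (1 - q * q ^ l)) * qBinom q (k + l + 1) k =
          poch q q (k + l + 1) := by
        rw [← poch_succ]; exact ihk (l + 1)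
      have h₂ : poch q q k * (1 - q * q ^ k) * poch q q l * qBinom q (k + l + 1) (k + 1) =
          poch q q (k + l + 1) := by
        rw [← poch_succ, Nat.add_right_comm]; exact ihl
      rw [show k + 1 + (l + 1) = k + l + 1 + 1 by omega, qBinom, poch_succ, poch_succ, poch_succ]
      linear_combination (1 - q * q ^ k) * h₁ + q ^ (k + 1) * (1 - q * q ^ l) * h₂

theorem prod_one_add_mul_pow (q y : R) (N : ℕ) :
    ∏ k ∈ range N, (1 + y * q ^ k) =
      ∑ j ∈ range (N + 1), q ^ j.choose 2 * qBinom q N j * y ^ j := by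
  induction N generalizing y with
  | zero => simp [qBinom]
  | succ N ih =>
    -- peel off the factor `1 + y` and apply the induction hypothesis at `y q`
    set a : ℕ → R := fun j => q ^ j.choose 2 * qBinom q N j * (y * q) ^ j with ha
    have hstep : ∀ j, q ^ (j + 1).choose 2 * qBinom q (N + 1) (j + 1) * y ^ (j + 1) =
        a j * y + a (j + 1) := by
      intro j
      have hc : (j + 1).choose 2 = j.choose 2 + j := by simp [Nat.choose_succ_succ, add_comm]
      simp only [ha, qBinom, hc]
      ring
    have hshift : ∑ j ∈ range (N + 1), a (j + 1) + 1 = ∑ j ∈ range (N + 1), a j := by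
      have h : ∑ j ∈ range (N + 1), a j + a (N + 1) = ∑ j ∈ range (N + 1), a (j + 1) + a 0 := by
        rw [← sum_range_succ, ← sum_range_succ']
      have ha₀ : a 0 = 1 := by simp [ha, qBinom]
      have ha₁ : a (N + 1) = 0 := by simp [ha, qBinom_eq_zero_of_lt q (Nat.lt_succ_self N)]
      rw [ha₀, ha₁, add_zero] at h
      exact h.symm
    have hprod : ∏ k ∈ range N, (1 + y * q ^ (k + 1)) = ∑ j ∈ range (N + 1), a j := by
      rw [← ih]
      exact prod_congr rfl fun k _ => by ring
    rw [prod_range_succ', pow_zero, mul_one, hprod,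
      sum_range_succ' (fun j => q ^ j.choose 2 * qBinom q (N + 1) j * y ^ j),
      sum_congr rfl fun j _ => hstep j, sum_add_distrib, ← sum_mul]
    simp only [Nat.choose_zero_succ, pow_zero, qBinom, mul_one]
    linear_combination (-1 : R) * hshift

end Algebra

lemma two_mul_natCast_choose_two (n : ℕ) : 2 * (n.choose 2 : ℤ) = n * (n - 1) := by
  induction n with
  | zero => simp
  | succ n ih =>
    rw [Nat.choose_succ_succ', Nat.choose_one_right]
    push_cast
    linear_combination ih

lemma Int.mul_sub_one_ediv_two_eq {n b : ℤ} (h : n * (n - 1) = 2 * b) : n * (n - 1) / 2 = b := by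
  rw [h]; omega

lemma prod_range_pow_succ {M : Type*} [CommMonoid M] (p : M) (N : ℕ) :
    ∏ k ∈ range N, p ^ (k + 1) = p ^ (N + 1).choose 2 := by
  induction N with
  | zero => simp
  | succ N ih =>
    rw [prod_range_succ, ih, ← pow_add, Nat.choose_succ_succ' (N + 1), Nat.choose_one_right,
      add_comm]

section Field

variable {K : Type*} [Field K]

def jacobiTerm (p x : K) (n : ℤ) : K := p ^ (n * (n - 1) / 2) * (-x) ^ n

lemma poch_mul_poch_div_eq_prod {p x : K} (hp : p ≠ 0) (hx : x ≠ 0) (N : ℕ) :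
    poch x p N * poch (p / x) p N =
      p ^ (N + 1).choose 2 / (-x) ^ N * ∏ k ∈ range (2 * N), (1 + (-x / p ^ N) * p ^ k) := by
  have hlow : ∏ k ∈ range N, (1 + (-x / p ^ N) * p ^ k) =
      (-x) ^ N / p ^ (N + 1).choose 2 * poch (p / x) p N := by
    rw [← prod_range_reflect, ← prod_range_pow_succ, poch,
      show (-x) ^ N = ∏ _k ∈ range N, -x by simp, ← prod_div_distrib, ← prod_mul_distrib]
    refine prod_congr rfl fun k hk => ?_
    have hk : p ^ N = p ^ (N - 1 - k) * p ^ (k + 1) := by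
      rw [← pow_add]; congr 1; have := mem_range.mp hk; omega
    rw [hk]
    field_simp
    ring
  have hhigh : ∏ k ∈ range N, (1 + (-x / p ^ N) * p ^ (N + k)) = poch x p N :=
    prod_congr rfl fun k _ => by rw [pow_add]; field_simp; ring
  have hx' : (-x) ^ N ≠ 0 := pow_ne_zero N (neg_ne_zero.mpr hx)
  rw [two_mul, prod_range_add, hlow, hhigh]
  field_simp

theorem poch_mul_poch_div_eq_sum_qBinom_mul_jacobiTerm {p x : K} (hp : p ≠ 0) (hx : x ≠ 0)
    (N : ℕ) :
    poch x p N * poch (p / x) p N =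
      ∑ n ∈ Icc (-N : ℤ) N, qBinom p (2 * N) (N + n).toNat * jacobiTerm p x n := by
  rw [poch_mul_poch_div_eq_prod hp hx, prod_one_add_mul_pow, mul_sum]
  refine (sum_nbij' (fun n : ℤ => (N + n).toNat) (fun j : ℕ => (j : ℤ) - N) ?_ ?_ ?_ ?_ ?_).symm
  · intro n hn; simp only [mem_Icc, mem_range] at hn ⊢; omega
  · intro j hj; simp only [mem_Icc, mem_range] at hj ⊢; omega
  · intro n hn; simp only [mem_Icc] at hn; omega
  · intro j _; omega
  · intro n hn
    obtain ⟨j, rfl⟩ : ∃ j : ℕ, n = j - N := ⟨(N + n).toNat, by simp only [mem_Icc] at hn; omega⟩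
    have hj : ((N : ℤ) + (j - N)).toNat = j := by omega
    have hexp : ((j : ℤ) - N) * ((j : ℤ) - N - 1) / 2 =
        ((j.choose 2 + (N + 1).choose 2 : ℕ) : ℤ) - ((N * j : ℕ) : ℤ) := by
      apply Int.mul_sub_one_ediv_two_eq
      have h₁ := two_mul_natCast_choose_two j
      have h₂ := two_mul_natCast_choose_two (N + 1)
      push_cast at h₂ ⊢
      linear_combination -h₁ - h₂
    rw [jacobiTerm, hj, hexp, zpow_sub₀ hp, zpow_sub₀ (neg_ne_zero.mpr hx)]
    rw [zpow_natCast, zpow_natCast, zpow_natCast, zpow_natCast, pow_add, pow_mul, div_pow]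
    ring

end Field

section Analysis

variable {q : ℂ}

lemma summable_norm_mul_pow (x : ℂ) (hq : ‖q‖ < 1) : Summable fun j : ℕ => ‖x * q ^ j‖ := by
  simpa [norm_pow] using (summable_geometric_of_lt_one (norm_nonneg q) hq).mul_left ‖x‖

lemma multipliable_one_sub_mul_pow (x : ℂ) (hq : ‖q‖ < 1) :
    Multipliable fun j : ℕ => 1 - x * q ^ j := by
  simpa [sub_eq_add_neg] using multipliable_one_add_of_summable (f := fun j => -(x * q ^ j))
    (by simpa using summable_norm_mul_pow x hq)

lemma tendsto_poch (x : ℂ) (hq : ‖q‖ < 1) : Tendsto (poch x q) atTop (𝓝 (pochInf x q)) :=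
  (multipliable_one_sub_mul_pow x hq).tendsto_prod_tprod_nat

lemma one_sub_mul_pow_self_ne_zero (hq : ‖q‖ < 1) (j : ℕ) : 1 - q * q ^ j ≠ 0 := by
  rw [sub_ne_zero, ← pow_succ']
  intro h
  have := congrArg norm h
  rw [norm_one, norm_pow] at this
  exact (pow_lt_one₀ (norm_nonneg q) hq j.succ_ne_zero).ne' this

lemma poch_self_ne_zero (hq : ‖q‖ < 1) (m : ℕ) : poch q q m ≠ 0 :=
  prod_ne_zero_iff.mpr fun j _ => one_sub_mul_pow_self_ne_zero hq j

lemma pochInf_self_ne_zero (hq : ‖q‖ < 1) : pochInf q q ≠ 0 := by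
  unfold pochInf
  simpa [sub_eq_add_neg] using tprod_one_add_ne_zero_of_summable (f := fun j => -(q * q ^ j))
    (fun j => by simpa [sub_eq_add_neg] using one_sub_mul_pow_self_ne_zero hq j)
    (by simpa using summable_norm_mul_pow q hq)

lemma qBinom_add_eq_div (hq : ‖q‖ < 1) (k l : ℕ) :
    qBinom q (k + l) k = poch q q (k + l) / (poch q q k * poch q q l) := by
  rw [← poch_mul_poch_mul_qBinom, mul_div_cancel_left₀ _
    (mul_ne_zero (poch_self_ne_zero hq k) (poch_self_ne_zero hq l))]

lemma tendsto_qBinom_add {α : Type*} {f : Filter α} {a b : α → ℕ} (hq : ‖q‖ < 1)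
    (ha : Tendsto a f atTop) (hb : Tendsto b f atTop) :
    Tendsto (fun i => qBinom q (a i + b i) (a i)) f (𝓝 (pochInf q q)⁻¹) := by
  have hL := tendsto_poch q hq
  have hL₀ := pochInf_self_ne_zero hq
  simp_rw [qBinom_add_eq_div hq]
  rw [show (pochInf q q)⁻¹ = pochInf q q / (pochInf q q * pochInf q q) by field_simp]
  exact (hL.comp (ha.atTop_add_atTop hb)).div ((hL.comp ha).mul (hL.comp hb)) (mul_ne_zero hL₀ hL₀)

lemma exists_norm_qBinom_add_le (hq : ‖q‖ < 1) : ∃ M, ∀ k l, ‖qBinom q (k + l) k‖ ≤ M := by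
  have hL := tendsto_poch q hq
  obtain ⟨A, hA⟩ := (Metric.isBounded_range_of_tendsto _ hL).exists_norm_le
  obtain ⟨B, hB⟩ := (Metric.isBounded_range_of_tendsto _
    (hL.inv₀ (pochInf_self_ne_zero hq))).exists_norm_le
  refine ⟨A * (B * B), fun k l => ?_⟩
  rw [qBinom_add_eq_div hq, div_eq_mul_inv, mul_inv, norm_mul, norm_mul]
  have hA₀ : 0 ≤ A := (norm_nonneg _).trans (hA _ ⟨0, rfl⟩)
  have hB₀ : 0 ≤ B := (norm_nonneg _).trans (hB _ ⟨0, rfl⟩)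
  exact mul_le_mul (hA _ ⟨_, rfl⟩) (mul_le_mul (hB _ ⟨_, rfl⟩) (hB _ ⟨_, rfl⟩) (norm_nonneg _) hB₀)
    (by positivity) hA₀

theorem tendsto_sum_Icc_qBinom_mul (hq : ‖q‖ < 1) {g : ℤ → ℂ} (hg : Summable (‖g ·‖)) :
    Tendsto (fun N : ℕ => ∑ n ∈ Icc (-N : ℤ) N, qBinom q (2 * N) (N + n).toNat * g n) atTop
      (𝓝 ((pochInf q q)⁻¹ * ∑' n, g n)) := by
  obtain ⟨M, hM⟩ := exists_norm_qBinom_add_le hq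
  have hsplit : ∀ (N : ℕ) (n : ℤ), n ∈ Icc (-N : ℤ) N → 2 * N = (N + n).toNat + (N - n).toNat := by
    intro N n hn; rw [mem_Icc] at hn; omega
  set F : ℕ → ℤ → ℂ := fun N n =>
    if n ∈ Icc (-N : ℤ) N then qBinom q (2 * N) (N + n).toNat * g n else 0
  have hF : ∀ N : ℕ, ∑' n, F N n = ∑ n ∈ Icc (-N : ℤ) N, qBinom q (2 * N) (N + n).toNat * g n :=
    fun N => (tsum_eq_sum fun n hn => if_neg hn).trans (sum_congr rfl fun n hn => if_pos hn)
  have hlim : ∀ n, Tendsto (F · n) atTop (𝓝 ((pochInf q q)⁻¹ * g n)) := by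
    intro n
    refine ((tendsto_qBinom_add hq (a := fun N : ℕ => (N + n).toNat)
      (b := fun N : ℕ => (N - n).toNat) ?_ ?_).mul_const (g n)).congr' ?_
    · exact tendsto_atTop_atTop.mpr fun b => ⟨b + n.natAbs, fun N hN => by omega⟩
    · exact tendsto_atTop_atTop.mpr fun b => ⟨b + n.natAbs, fun N hN => by omega⟩
    · filter_upwards [eventually_ge_atTop n.natAbs] with N hN
      have hn : n ∈ Icc (-N : ℤ) N := by rw [mem_Icc]; omega
      simp only [F, if_pos hn, hsplit N n hn]
  have hbound : ∀ N n, ‖F N n‖ ≤ M * ‖g n‖ := by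
    intro N n
    by_cases hn : n ∈ Icc (-N : ℤ) N
    · simp only [F, if_pos hn, hsplit N n hn, norm_mul]
      exact mul_le_mul_of_nonneg_right (hM _ _) (norm_nonneg _)
    · simp only [F, if_neg hn, norm_zero]
      exact mul_nonneg ((norm_nonneg _).trans (hM 0 0)) (norm_nonneg _)
  simpa only [hF, tsum_mul_left] using
    tendsto_tsum_of_dominated_convergence (hg.mul_left M) hlim (Eventually.of_forall hbound)

end Analysis

lemma summable_pow_choose_two_mul_pow {t r : ℝ} (ht₀ : 0 ≤ t) (ht₁ : t < 1) (hr : 0 ≤ r) :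
    Summable fun n : ℕ => t ^ n.choose 2 * r ^ n := by
  obtain ⟨k, hk⟩ : ∃ k : ℕ, t ^ k * r < 1 :=
    (((tendsto_pow_atTop_nhds_zero_of_lt_one ht₀ ht₁).mul_const r).eventually
      (gt_mem_nhds (by simp))).exists
  refine (summable_geometric_of_lt_one (by positivity) hk).of_norm_bounded_eventually_nat ?_
  filter_upwards [eventually_ge_atTop (2 * k + 1)] with n hn
  have hkn : k * n ≤ n.choose 2 := by
    rw [Nat.choose_two_right, Nat.le_div_iff_mul_le two_pos, mul_right_comm, mul_comm]
    exact Nat.mul_le_mul_left n (by omega)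
  rw [Real.norm_of_nonneg (by positivity), mul_pow, ← pow_mul]
  exact mul_le_mul_of_nonneg_right (pow_le_pow_of_le_one ht₀ ht₁.le hkn) (by positivity)

lemma summable_zpow_mul_sub_one_div_two_mul_zpow {t r : ℝ} (ht₀ : 0 ≤ t) (ht₁ : t < 1)
    (hr : 0 ≤ r) : Summable fun n : ℤ => t ^ (n * (n - 1) / 2) * r ^ n := by
  refine .of_nat_of_neg ((summable_pow_choose_two_mul_pow ht₀ ht₁ hr).congr fun k => ?_)
    ((summable_pow_choose_two_mul_pow ht₀ ht₁ (div_nonneg ht₀ hr)).congr fun k => ?_)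
  · rw [Int.mul_sub_one_ediv_two_eq (two_mul_natCast_choose_two k).symm, zpow_natCast,
      zpow_natCast]
  · have h := two_mul_natCast_choose_two k
    rw [Int.mul_sub_one_ediv_two_eq (b := ((k.choose 2 + k : ℕ) : ℤ))
      (by push_cast; linear_combination -h), zpow_natCast, zpow_neg, zpow_natCast, pow_add,
      div_pow, div_eq_mul_inv]
    ring

lemma summable_norm_jacobiTerm {p : ℂ} (hp : ‖p‖ < 1) (x : ℂ) :
    Summable fun n => ‖jacobiTerm p x n‖ := by
  simpa [jacobiTerm, norm_zpow] using
    summable_zpow_mul_sub_one_div_two_mul_zpow (norm_nonneg p) hp (norm_nonneg (-x))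

lemma hasSum_jacobiTerm_zero (x : ℂ) : HasSum (jacobiTerm 0 x) (1 - x) := by
  have hsupp : ∀ n ∉ ({0, 1} : Finset ℤ), jacobiTerm 0 x n = 0 := by
    intro n hn
    have hn : n ≠ 0 ∧ n ≠ 1 := by simpa using hn
    have : n * (n - 1) / 2 ≠ 0 := by
      have : 2 ≤ n * (n - 1) := by
        rcases (by omega : n ≤ -1 ∨ 2 ≤ n) with h | h <;> nlinarith
      omega
    rw [jacobiTerm, zero_zpow _ this, zero_mul]
  simpa [jacobiTerm, sub_eq_add_neg] using hasSum_sum_of_ne_finset_zero hsupp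

lemma pochInf_zero_left (q : ℂ) : pochInf 0 q = 1 := by simp [pochInf]

lemma pochInf_zero_right (x : ℂ) : pochInf x 0 = 1 - x := by
  rw [pochInf, tprod_eq_mulSingle 0 fun j hj => by simp [hj]]
  simp

/-- Jacobi triple product: `∑_{n∈ℤ} p^{n(n-1)/2} (-x)^n = (p;p)_∞ θ_p(x)`. -/
theorem jacobi_triple_product (p x : ℂ) (hp : ‖p‖ < 1) (hx : x ≠ 0) :
    HasSum (fun n : ℤ => p ^ (n * (n - 1) / 2) * (-x) ^ n)
      (pochInf p p * theta p x) := by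
  -- the finite identity divides by powers of `p`
  rcases eq_or_ne p 0 with rfl | hp₀
  · rw [theta, zero_div, pochInf_zero_left, pochInf_zero_right, one_mul, mul_one]
    exact hasSum_jacobiTerm_zero x
  have hg := summable_norm_jacobiTerm hp x
  have hfin : Tendsto (fun N : ℕ => poch x p N * poch (p / x) p N) atTop
      (𝓝 ((pochInf p p)⁻¹ * ∑' n, jacobiTerm p x n)) := by
    simpa only [poch_mul_poch_div_eq_sum_qBinom_mul_jacobiTerm hp₀ hx] using
      tendsto_sum_Icc_qBinom_mul hp hg
  have hθ := tendsto_nhds_unique hfin ((tendsto_poch x hp).mul (tendsto_poch (p / x) hp))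
  rw [inv_mul_eq_iff_eq_mul₀ (pochInf_self_ne_zero hp)] at hθ
  exact hθ ▸ hg.of_norm.hasSum
end

section
/- (Duplication formula) For |p|<1, |q|<1 and suitable z ∈ ℂ*, Γ_{p,q}(z²) = Γ_{p,q}(z)Γ_{p,q}(-z)Γ_{p,q}(q^{1/2}z)Γ_{p,q}(-q^{1/2}z)Γ_{p,q}(p^{1/2}z)Γ_{p,q}(-p^{1/2}z)Γ_{p,q}((pq)^{1/2}z)Γ_{p,q}(-(pq)^{1/2}z), where q^{1/2}, p^{1/2} are fixed square roots. -/
/-!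
Both sides are absolutely convergent products over `(j, k) ∈ ℕ²`: for `‖p‖, ‖q‖ < 1` each factor
is `1 + O(p^j q^k)`, so the factors may be regrouped freely. Grouping the factors of `±w` with the
same index gives `Γ_{p,q}(w) Γ_{p,q}(-w) = Γ_{p²,q²}(w²)`, and grouping the indices by parity gives
`Γ_{p,q}(x) = Γ_{p²,q²}(x) Γ_{p²,q²}(qx) Γ_{p²,q²}(px) Γ_{p²,q²}(pqx)`. With `p = sp²`, `q = sq²` and
`x = z²`, the four factors on the right are the products over the pairs `±z`, `±sq z`, `±sp z` and
`±sp sq z`.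
-/

open scoped BigOperators

/-- The elliptic gamma function
`Γ_{p,q}(z) = ∏_{j,k≥0} (1 - z⁻¹ p^{j+1} q^{k+1})/(1 - z p^j q^k)`. -/
noncomputable def ellGamma (p q z : ℂ) : ℂ :=
  ∏' jk : ℕ × ℕ,
    (1 - z⁻¹ * p ^ (jk.1 + 1) * q ^ (jk.2 + 1)) / (1 - z * p ^ jk.1 * q ^ jk.2)

open Filter Asymptotics Topology

theorem HasProd.prod_mul_two_add_fin_two {α : Type*} [CommMonoid α] [TopologicalSpace α]
    [ContinuousMul α] [RegularSpace α] {f : ℕ × ℕ → α} {a : α} (hf : HasProd f a) :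
    HasProd (fun jk : ℕ × ℕ => ∏ b : Fin 2, ∏ c : Fin 2, f (jk.1 * 2 + b, jk.2 * 2 + c)) a := by
  let e : (ℕ × ℕ) × (Fin 2 × Fin 2) ≃ ℕ × ℕ :=
    (Equiv.prodProdProdComm ℕ ℕ (Fin 2) (Fin 2)).trans
      ((Nat.divModEquiv 2).symm.prodCongr (Nat.divModEquiv 2).symm)
  refine (e.hasProd_iff.2 hf).prod_fiberwise fun jk => ?_
  have h := hasProd_fintype fun bc : Fin 2 × Fin 2 => f (e (jk, bc))
  rwa [Fintype.prod_prod_type] at h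

theorem inv_mul_sq_pow_succ {G₀ : Type*} [GroupWithZero G₀] (a : G₀) (n : ℕ) :
    a⁻¹ * (a ^ 2) ^ (n + 1) = a ^ (n * 2 + 1) := by
  rcases eq_or_ne a 0 with rfl | ha
  · simp
  · rw [← pow_mul, show 2 * (n + 1) = n * 2 + 1 + 1 by ring, pow_succ', inv_mul_cancel_left₀ ha]

noncomputable def ellGammaFactor (p q w : ℂ) (jk : ℕ × ℕ) : ℂ :=
  (1 - w⁻¹ * p ^ (jk.1 + 1) * q ^ (jk.2 + 1)) / (1 - w * p ^ jk.1 * q ^ jk.2)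

theorem ellGammaFactor_mul_ellGammaFactor_neg (p q w : ℂ) (jk : ℕ × ℕ) :
    ellGammaFactor p q w jk * ellGammaFactor p q (-w) jk
      = ellGammaFactor (p ^ 2) (q ^ 2) (w ^ 2) jk := by
  simp only [ellGammaFactor, div_mul_div_comm, inv_neg]
  ring

theorem prod_ellGammaFactor_mul_two_add (p q x : ℂ) (jk : ℕ × ℕ) :
    ∏ b : Fin 2, ∏ c : Fin 2, ellGammaFactor p q x (jk.1 * 2 + b, jk.2 * 2 + c)
      = ellGammaFactor (p ^ 2) (q ^ 2) x jk * ellGammaFactor (p ^ 2) (q ^ 2) (q * x) jk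
        * ellGammaFactor (p ^ 2) (q ^ 2) (p * x) jk
        * ellGammaFactor (p ^ 2) (q ^ 2) (p * q * x) jk := by
  have hp_odd : p ^ (jk.1 * 2 + 1) = p⁻¹ * (p ^ 2) ^ (jk.1 + 1) := (inv_mul_sq_pow_succ p jk.1).symm
  have hq_odd : q ^ (jk.2 * 2 + 1) = q⁻¹ * (q ^ 2) ^ (jk.2 + 1) := (inv_mul_sq_pow_succ q jk.2).symm
  have hp_even : p ^ (jk.1 * 2 + 1 + 1) = (p ^ 2) ^ (jk.1 + 1) := by ring
  have hq_even : q ^ (jk.2 * 2 + 1 + 1) = (q ^ 2) ^ (jk.2 + 1) := by ring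
  simp only [Fin.prod_univ_two, ellGammaFactor, div_mul_div_comm, mul_inv, Fin.val_zero,
    Fin.val_one, add_zero]
  congr 1
  · rw [hp_odd, hq_odd, hp_even, hq_even]
    ring
  · ring

section

variable {p q : ℂ}

theorem summable_norm_pow_mul_pow (hp : ‖p‖ < 1) (hq : ‖q‖ < 1) :
    Summable fun jk : ℕ × ℕ => ‖p ^ jk.1 * q ^ jk.2‖ :=
  Summable.mul_norm (by simpa using summable_geometric_of_lt_one (norm_nonneg p) hp)
    (by simpa using summable_geometric_of_lt_one (norm_nonneg q) hq)

theorem multipliable_ellGammaFactor (hp : ‖p‖ < 1) (hq : ‖q‖ < 1) (w : ℂ) :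
    Multipliable (ellGammaFactor p q w) := by
  set B : ℕ × ℕ → ℂ := fun jk => p ^ jk.1 * q ^ jk.2
  have hB : Summable fun jk => ‖B jk‖ := summable_norm_pow_mul_pow hp hq
  have hden : Tendsto (fun jk => 1 - w * B jk) cofinite (𝓝 1) := by
    simpa using tendsto_const_nhds.sub (hB.of_norm.tendsto_cofinite_zero.const_mul w)
  have hbound : Tendsto (fun jk => (w - w⁻¹ * p * q) * (1 - w * B jk)⁻¹) cofinite
      (𝓝 (w - w⁻¹ * p * q)) := by
    simpa using tendsto_const_nhds.mul (hden.inv₀ one_ne_zero)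
  -- only eventually: a factor with vanishing denominator is the junk value `0`
  have hsub : (fun jk => ellGammaFactor p q w jk - 1)
      =ᶠ[cofinite] fun jk => B jk * ((w - w⁻¹ * p * q) * (1 - w * B jk)⁻¹) := by
    filter_upwards [hden.eventually_ne one_ne_zero] with jk hjk
    rw [← mul_assoc] at hjk
    simp only [ellGammaFactor, B]
    rw [div_sub_one hjk, div_eq_mul_inv]
    ring
  have hO : (fun jk => ellGammaFactor p q w jk - 1) =O[cofinite] B := by
    simpa using hsub.trans_isBigO ((isBigO_refl B _).mul (hbound.isBigO_one ℂ))
  simpa using multipliable_one_add_of_summable (summable_of_isBigO hB hO.norm_left.norm_right)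

theorem hasProd_ellGammaFactor (hp : ‖p‖ < 1) (hq : ‖q‖ < 1) (w : ℂ) :
    HasProd (ellGammaFactor p q w) (ellGamma p q w) :=
  (multipliable_ellGammaFactor hp hq w).hasProd

theorem ellGamma_mul_ellGamma_neg (hp : ‖p‖ < 1) (hq : ‖q‖ < 1) (w : ℂ) :
    ellGamma p q w * ellGamma p q (-w) = ellGamma (p ^ 2) (q ^ 2) (w ^ 2) := by
  have h := (hasProd_ellGammaFactor hp hq w).mul (hasProd_ellGammaFactor hp hq (-w))
  simp only [ellGammaFactor_mul_ellGammaFactor_neg] at h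
  exact h.tprod_eq.symm

theorem ellGamma_eq_mul_ellGamma_sq (hp : ‖p‖ < 1) (hq : ‖q‖ < 1) (x : ℂ) :
    ellGamma p q x = ellGamma (p ^ 2) (q ^ 2) x * ellGamma (p ^ 2) (q ^ 2) (q * x)
      * ellGamma (p ^ 2) (q ^ 2) (p * x) * ellGamma (p ^ 2) (q ^ 2) (p * q * x) := by
  have hp2 : ‖p ^ 2‖ < 1 := by simpa using pow_lt_one₀ (norm_nonneg p) hp two_ne_zero
  have hq2 : ‖q ^ 2‖ < 1 := by simpa using pow_lt_one₀ (norm_nonneg q) hq two_ne_zero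
  have h := (hasProd_ellGammaFactor hp hq x).prod_mul_two_add_fin_two
  simp only [prod_ellGammaFactor_mul_two_add] at h
  exact h.unique ((((hasProd_ellGammaFactor hp2 hq2 x).mul (hasProd_ellGammaFactor hp2 hq2 _)).mul
    (hasProd_ellGammaFactor hp2 hq2 _)).mul (hasProd_ellGammaFactor hp2 hq2 _))

end

theorem ellGamma_duplication_general (p q z sp sq : ℂ)
    (hp : ‖p‖ < 1) (hq : ‖q‖ < 1)
    (hsp : sp ^ 2 = p) (hsq : sq ^ 2 = q) :
    ellGamma p q (z ^ 2)
      = ellGamma p q z * ellGamma p q (-z) * ellGamma p q (sq * z)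
          * ellGamma p q (-(sq * z)) * ellGamma p q (sp * z) * ellGamma p q (-(sp * z))
          * ellGamma p q (sp * sq * z) * ellGamma p q (-(sp * sq * z)) := by
  subst hsp hsq
  rw [ellGamma_eq_mul_ellGamma_sq hp hq, show sq ^ 2 * z ^ 2 = (sq * z) ^ 2 by ring,
    show sp ^ 2 * z ^ 2 = (sp * z) ^ 2 by ring,
    show sp ^ 2 * sq ^ 2 * z ^ 2 = (sp * sq * z) ^ 2 by ring]
  simp only [← ellGamma_mul_ellGamma_neg hp hq]
  ring

theorem ellGamma_duplication (p q z sp sq : ℂ)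
    (hp : ‖p‖ < 1) (hq : ‖q‖ < 1)
    (hsp : sp ^ 2 = p) (hsq : sq ^ 2 = q) (hz : z ≠ 0)
    (hpole : ∀ j k : ℕ, z ^ 2 * p ^ j * q ^ k ≠ 1)
    (hpole' : ∀ (j k : ℕ) (w : ℂ),
      w ∈ ({z, -z, sq * z, -(sq * z), sp * z, -(sp * z),
            sp * sq * z, -(sp * sq * z)} : Set ℂ) → w * p ^ j * q ^ k ≠ 1) :
    ellGamma p q (z ^ 2)
      = ellGamma p q z * ellGamma p q (-z) * ellGamma p q (sq * z)
          * ellGamma p q (-(sq * z)) * ellGamma p q (sp * z) * ellGamma p q (-(sp * z))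
          * ellGamma p q (sp * sq * z) * ellGamma p q (-(sp * sq * z)) :=
  ellGamma_duplication_general p q z sp sq hp hq hsp hsq
end
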